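/- arXiv:1710.08794 — 2 statements merged into one kernel-verified Lean document; each statement's English description precedes it below -/
import Mathlib

section
/- Let n ≥ 2, let ν ∈ ℕ₀ ∪ {−1/2, 1/2}, and let ω̃ belong to the class L¹_{H₂}(ℝ) for n with support contained in [0,∞). Define ω : (0,∞) → ℝ by ω(x) = (1/Γ(ν+1)) ∫₀^∞ (x/y)^ν · e^{−x/y} · ω̃(y) · y^{−1} dy. Then for every κ ∈ [1,n] and every l = 0,…,n−1 one has ∫₀^∞ x^{κ−1} · |(D_ν^l ω)(x)| dx ≤ (Γ(ν+κ)/Γ(ν+1)) · ∫₀^∞ y^{κ−1} · |ω̃^{(l)}(y)| dy < ∞. -/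
/-!
Write `(T g)(x) = ∫₀^∞ K(x,y) g(y) dy` with `K(x,y) = (x/y)^ν e^{-x/y} / y`, so that
`ω = Γ(ν+1)⁻¹ T ω̃` on `(0,∞)`. The kernel satisfies `x^ν ∂ₓ (x^{1-ν} ∂ₓ K) = ∂_y K`;
differentiating under the integral sign twice and integrating by parts in `y` (the boundary
terms vanish because `u^{ν+1} e^{-u} → 0` at both ends) gives `D_ν (T g) = -T g′`, hence
`D_ν^l ω = (-1)^l Γ(ν+1)⁻¹ T ω̃^{(l)}`. The weighted bound is then Tonelli's theorem combined
with `|T g| ≤ T |g|` and the moment identity `∫₀^∞ x^{κ-1} K(x,y) dx = Γ(ν+κ) y^{κ-1}`.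
-/

open MeasureTheory Finset

/-- The differential operator `(D_ν f)(x) = x^ν · d/dx( x^{1−ν} · f′(x) )`. -/
noncomputable def Dnu (ν : ℝ) (f : ℝ → ℝ) : ℝ → ℝ :=
  fun x => x ^ ν * deriv (fun t : ℝ => t ^ (1 - ν) * deriv f t) x

open Set Filter Topology
open scoped Nat

lemma rpow_mul_exp_neg_le {p : ℝ} (hp : 0 ≤ p) {u : ℝ} (hu : 0 ≤ u) :
    u ^ p * Real.exp (-u) ≤ 1 + (⌈p⌉₊)! := by
  set m := ⌈p⌉₊
  have h_rpow : u ^ p ≤ 1 + u ^ m := by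
    rcases le_or_gt u 1 with h | h
    · linarith [Real.rpow_le_one hu h hp, pow_nonneg hu m]
    · rw [← Real.rpow_natCast]
      linarith [Real.rpow_le_rpow_of_exponent_le h.le (Nat.le_ceil p)]
  have h_pow : u ^ m ≤ m ! * Real.exp u := by
    have := Real.pow_div_factorial_le_exp _ hu m
    rwa [div_le_iff₀ (by positivity), mul_comm] at this
  calc u ^ p * Real.exp (-u) ≤ (1 + m ! * Real.exp u) * Real.exp (-u) := by gcongr; linarith
    _ = Real.exp (-u) + m ! := by rw [add_mul, mul_assoc, ← Real.exp_add]; simp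
    _ ≤ 1 + m ! := by gcongr; exact Real.exp_le_one_iff.mpr (by linarith)

lemma exists_rpow_mul_abs_sub_mul_exp_neg_le {p : ℝ} (hp : 0 ≤ p) (c : ℝ) :
    ∃ C, ∀ u, 0 ≤ u → u ^ p * |c - u| * Real.exp (-u) ≤ C := by
  refine ⟨|c| * (1 + (⌈p⌉₊)!) + (1 + (⌈p + 1⌉₊)!), fun u hu => ?_⟩
  have h_abs : |c - u| ≤ |c| + u := (abs_sub c u).trans (by rw [abs_of_nonneg hu])
  calc u ^ p * |c - u| * Real.exp (-u) ≤ u ^ p * (|c| + u) * Real.exp (-u) := by gcongr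
    _ = |c| * (u ^ p * Real.exp (-u)) + u ^ (p + 1) * Real.exp (-u) := by
        rw [Real.rpow_add_one' hu (by linarith)]; ring
    _ ≤ _ := by
        gcongr
        exacts [rpow_mul_exp_neg_le hp hu, rpow_mul_exp_neg_le (by linarith) hu]

lemma integrableOn_mul_of_abs_le {s : Set ℝ} {k g : ℝ → ℝ} {C : ℝ} (hs : MeasurableSet s)
    (hg : IntegrableOn g s) (hk : Measurable k) (hkC : ∀ y ∈ s, |k y| ≤ C) :
    IntegrableOn (fun y => k y * g y) s :=
  hg.bdd_mul hk.aestronglyMeasurable ((ae_restrict_iff' hs).mpr (ae_of_all _ hkC))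

lemma hasDerivAt_integral_Ioi_mul {K K' : ℝ → ℝ → ℝ} {g : ℝ → ℝ} {x b C C' : ℝ}
    (hx : 0 < x) (hg : IntegrableOn g (Ioi 0))
    (hK : ∀ t, Measurable (K t)) (hK' : ∀ t, Measurable (K' t))
    (hK_bound : ∀ y ∈ Ioi (0 : ℝ), |K x y| ≤ C)
    (hK'_bound : ∀ t y, 0 < t → 0 < y → |K' t y| ≤ C' * t ^ b)
    (hK_deriv : ∀ t y, 0 < t → 0 < y → HasDerivAt (K · y) (K' t y) t) :
    HasDerivAt (fun t => ∫ y in Ioi 0, K t y * g y) (∫ y in Ioi 0, K' x y * g y) x := by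
  have h_near : ∀ᶠ t in 𝓝 x, 0 < t ∧ t ^ b < x ^ b + 1 :=
    (lt_mem_nhds hx).and ((Real.continuousAt_rpow_const x b (Or.inl hx.ne')).eventually_lt
      continuousAt_const (lt_add_one _))
  refine (hasDerivAt_integral_of_dominated_loc_of_deriv_le (F' := fun t y => K' t y * g y)
    h_near (Eventually.of_forall fun t => (hK t).aestronglyMeasurable.mul hg.aestronglyMeasurable)
    (integrableOn_mul_of_abs_le measurableSet_Ioi hg (hK x) hK_bound)
    ((hK' x).aestronglyMeasurable.mul hg.aestronglyMeasurable)
    (bound := fun y => |C'| * (x ^ b + 1) * |g y|) ?_ (hg.abs.const_mul _) ?_).2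
  · refine (ae_restrict_iff' measurableSet_Ioi).mpr (ae_of_all _ fun y hy t ht => ?_)
    rw [Real.norm_eq_abs, abs_mul]
    gcongr
    calc |K' t y| ≤ C' * t ^ b := hK'_bound t y ht.1 hy
      _ ≤ |C'| * t ^ b := by gcongr; exacts [Real.rpow_nonneg ht.1.le b, le_abs_self C']
      _ ≤ |C'| * (x ^ b + 1) := by gcongr; exact ht.2.le
  · exact (ae_restrict_iff' measurableSet_Ioi).mpr
      (ae_of_all _ fun y hy t ht => (hK_deriv t y ht.1 hy).mul_const (g y))

noncomputable def gammaKernel (ν x y : ℝ) : ℝ := (x / y) ^ ν * Real.exp (-(x / y)) / y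

-- `x ^ (1 - ν) * ∂ₓ gammaKernel ν x y`, in a form whose `x`-derivative is elementary.
noncomputable def gammaKernelFlux (ν x y : ℝ) : ℝ :=
  (ν - x / y) * Real.exp (-(x / y)) / y ^ (ν + 1)

noncomputable def gammaKernelDerivSnd (ν x y : ℝ) : ℝ :=
  (x / y) ^ ν * (x / y - (ν + 1)) * Real.exp (-(x / y)) / y ^ 2

section Kernel

variable {ν x y : ℝ}

lemma gammaKernel_nonneg (hx : 0 ≤ x) (hy : 0 ≤ y) : 0 ≤ gammaKernel ν x y := by
  unfold gammaKernel; positivity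

lemma measurable_gammaKernel : Measurable (Function.uncurry (gammaKernel ν)) := by
  unfold gammaKernel; fun_prop

lemma measurable_gammaKernelFlux : Measurable (gammaKernelFlux ν x) := by
  unfold gammaKernelFlux; fun_prop

lemma measurable_gammaKernelDerivSnd : Measurable (gammaKernelDerivSnd ν x) := by
  unfold gammaKernelDerivSnd; fun_prop

lemma gammaKernel_eq (hx : 0 < x) (hy : 0 < y) :
    gammaKernel ν x y = (x / y) ^ (ν + 1) * Real.exp (-(x / y)) / x := by
  rw [gammaKernel, Real.rpow_add_one (div_pos hx hy).ne']
  field_simp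

lemma rpow_mul_gammaKernelFlux_eq (s : ℝ) (hx : 0 < x) (hy : 0 < y) :
    x ^ s * gammaKernelFlux ν x y =
      (x / y) ^ (ν + 1) * (ν - x / y) * Real.exp (-(x / y)) * x ^ (s - (ν + 1)) := by
  rw [gammaKernelFlux, Real.div_rpow hx.le hy.le, Real.rpow_sub hx]
  have := Real.rpow_pos_of_pos hx (ν + 1)
  have := Real.rpow_pos_of_pos hy (ν + 1)
  field_simp

lemma rpow_mul_gammaKernelDerivSnd_eq (s : ℝ) (hx : 0 < x) (hy : 0 < y) :
    x ^ s * gammaKernelDerivSnd ν x y =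
      (x / y) ^ (ν + 2) * (x / y - (ν + 1)) * Real.exp (-(x / y)) * x ^ (s - 2) := by
  rw [gammaKernelDerivSnd, Real.rpow_sub hx, Real.rpow_add (div_pos hx hy), Real.rpow_two,
    Real.rpow_two]
  field_simp

lemma hasDerivAt_gammaKernel_fst (hx : 0 < x) (hy : 0 < y) :
    HasDerivAt (gammaKernel ν · y) (x ^ (ν - 1) * gammaKernelFlux ν x y) x := by
  have hu : 0 < x / y := div_pos hx hy
  have h_div : HasDerivAt (· / y) (1 / y) x := by simpa using (hasDerivAt_id x).div_const y
  have h := ((h_div.rpow_const (p := ν) (Or.inl hu.ne')).mul h_div.neg.exp).div_const y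
  refine h.congr_deriv ?_
  simp only [Pi.neg_apply]
  rw [gammaKernelFlux, Real.rpow_sub_one hu.ne', Real.rpow_sub_one hx.ne',
    Real.div_rpow hx.le hy.le, Real.rpow_add_one hy.ne']
  have := Real.rpow_pos_of_pos hx ν
  have := Real.rpow_pos_of_pos hy ν
  field_simp
  ring

lemma hasDerivAt_gammaKernelFlux_fst (hx : 0 < x) (hy : 0 < y) :
    HasDerivAt (gammaKernelFlux ν · y) (x ^ (-ν) * gammaKernelDerivSnd ν x y) x := by
  have h_div : HasDerivAt (· / y) (1 / y) x := by simpa using (hasDerivAt_id x).div_const y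
  have h := ((h_div.const_sub ν).mul h_div.neg.exp).div_const (y ^ (ν + 1))
  refine h.congr_deriv ?_
  simp only [Pi.neg_apply]
  rw [gammaKernelDerivSnd, Real.rpow_neg hx.le, Real.div_rpow hx.le hy.le,
    Real.rpow_add_one hy.ne']
  have := Real.rpow_pos_of_pos hx ν
  have := Real.rpow_pos_of_pos hy ν
  field_simp
  ring

lemma hasDerivAt_gammaKernel_snd (hx : 0 < x) (hy : 0 < y) :
    HasDerivAt (gammaKernel ν x ·) (gammaKernelDerivSnd ν x y) y := by
  have hu : 0 < x / y := div_pos hx hy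
  have h_div : HasDerivAt (x / ·) (-(x / y ^ 2)) y := by
    simpa [div_eq_mul_inv] using (hasDerivAt_inv hy.ne').const_mul x
  have h := ((h_div.rpow_const (p := ν) (Or.inl hu.ne')).mul h_div.neg.exp).div
    (hasDerivAt_id y) hy.ne'
  refine h.congr_deriv ?_
  simp only [Pi.neg_apply, Pi.mul_apply, id]
  rw [gammaKernelDerivSnd, Real.rpow_sub_one hu.ne']
  field_simp
  ring

lemma exists_abs_gammaKernel_le (hν : -1 ≤ ν) :
    ∃ C, ∀ x y, 0 < x → 0 < y → |gammaKernel ν x y| ≤ C * x ^ (-1 : ℝ) := by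
  refine ⟨1 + (⌈ν + 1⌉₊)!, fun x y hx hy => ?_⟩
  have hu := div_pos hx hy
  rw [gammaKernel_eq hx hy, abs_of_nonneg (by positivity), Real.rpow_neg_one, div_eq_mul_inv]
  gcongr
  exact rpow_mul_exp_neg_le (by linarith) hu.le

lemma exists_abs_rpow_mul_gammaKernelFlux_le (hν : -1 ≤ ν) :
    ∃ C, ∀ s x y : ℝ, 0 < x → 0 < y →
      |x ^ s * gammaKernelFlux ν x y| ≤ C * x ^ (s - (ν + 1)) := by
  obtain ⟨C, hC⟩ := exists_rpow_mul_abs_sub_mul_exp_neg_le (p := ν + 1) (by linarith) ν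
  refine ⟨C, fun s x y hx hy => ?_⟩
  have hu := div_pos hx hy
  rw [rpow_mul_gammaKernelFlux_eq s hx hy, abs_mul, abs_mul, abs_mul,
    abs_of_nonneg (Real.rpow_nonneg hu.le _), abs_of_pos (Real.exp_pos _),
    abs_of_pos (Real.rpow_pos_of_pos hx _)]
  gcongr
  exact hC _ hu.le

lemma exists_abs_rpow_mul_gammaKernelDerivSnd_le (hν : -2 ≤ ν) :
    ∃ C, ∀ s x y : ℝ, 0 < x → 0 < y →
      |x ^ s * gammaKernelDerivSnd ν x y| ≤ C * x ^ (s - 2) := by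
  obtain ⟨C, hC⟩ := exists_rpow_mul_abs_sub_mul_exp_neg_le (p := ν + 2) (by linarith) (ν + 1)
  refine ⟨C, fun s x y hx hy => ?_⟩
  have hu := div_pos hx hy
  rw [rpow_mul_gammaKernelDerivSnd_eq s hx hy, abs_mul, abs_mul, abs_mul, abs_sub_comm,
    abs_of_nonneg (Real.rpow_nonneg hu.le _), abs_of_pos (Real.exp_pos _),
    abs_of_pos (Real.rpow_pos_of_pos hx _)]
  gcongr
  exact hC _ hu.le

lemma tendsto_gammaKernel_nhdsGT_zero (hx : 0 < x) :
    Tendsto (gammaKernel ν x) (𝓝[>] 0) (𝓝 0) := by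
  have h_inv : Tendsto (x / ·) (𝓝[>] (0 : ℝ)) atTop := by
    simpa only [div_eq_mul_inv] using tendsto_inv_nhdsGT_zero.const_mul_atTop hx
  have h_decay : Tendsto (fun u : ℝ => u ^ (ν + 1) * Real.exp (-u)) atTop (𝓝 0) := by
    simpa using tendsto_rpow_mul_exp_neg_mul_atTop_nhds_zero (ν + 1) 1 one_pos
  have h := (h_decay.comp h_inv).div_const x
  rw [zero_div] at h
  refine h.congr' ?_
  filter_upwards [self_mem_nhdsWithin] with y hy
  exact (gammaKernel_eq hx hy).symm

end Kernel

noncomputable def gammaTransform (ν : ℝ) (g : ℝ → ℝ) (x : ℝ) : ℝ :=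
  ∫ y in Ioi 0, gammaKernel ν x y * g y

section Transform

variable {ν x : ℝ} {g : ℝ → ℝ}

lemma gammaTransform_const_mul (c : ℝ) :
    gammaTransform ν (fun y => c * g y) x =
      c * ∫ y in Ioi 0, (x / y) ^ ν * Real.exp (-(x / y)) * g y / y := by
  rw [gammaTransform, ← integral_const_mul]
  congr 1 with y
  rw [gammaKernel]
  ring

lemma integral_gammaKernelDerivSnd_mul (hν : -1 ≤ ν) (hx : 0 < x) (hg : Differentiable ℝ g)
    (hgi : IntegrableOn g (Ioi 0)) (hg'i : IntegrableOn (deriv g) (Ioi 0)) :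
    ∫ y in Ioi 0, gammaKernelDerivSnd ν x y * g y =
      -∫ y in Ioi 0, gammaKernel ν x y * deriv g y := by
  obtain ⟨C, hC⟩ := exists_abs_gammaKernel_le hν
  obtain ⟨C₂, hC₂⟩ := exists_abs_rpow_mul_gammaKernelDerivSnd_le (by linarith : -2 ≤ ν)
  have hK_bound : ∀ y ∈ Ioi (0 : ℝ), |gammaKernel ν x y| ≤ C * x ^ (-1 : ℝ) :=
    fun y hy => hC x y hx hy
  have hK₂_bound :
      ∀ y ∈ Ioi (0 : ℝ), |gammaKernelDerivSnd ν x y| ≤ C₂ * x ^ (-2 : ℝ) :=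
    fun y hy => by simpa using hC₂ 0 x y hx hy
  have hK_meas : Measurable (gammaKernel ν x) := measurable_gammaKernel.of_uncurry_left
  have hKg'_int := integrableOn_mul_of_abs_le measurableSet_Ioi hg'i hK_meas hK_bound
  have hK₂g_int := integrableOn_mul_of_abs_le measurableSet_Ioi hgi
    measurable_gammaKernelDerivSnd hK₂_bound
  have hK_deriv : ∀ y ∈ Ioi (0 : ℝ),
      HasDerivAt (gammaKernel ν x) (gammaKernelDerivSnd ν x y) y :=
    fun y hy => hasDerivAt_gammaKernel_snd hx hy
  have h_zero : Tendsto (fun y => gammaKernel ν x y * g y) (𝓝[>] 0) (𝓝 0) := by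
    simpa using (tendsto_gammaKernel_nhdsGT_zero hx).mul
      ((hg.continuous.tendsto 0).mono_left nhdsWithin_le_nhds)
  have h_infty : Tendsto (gammaKernel ν x * g) atTop (𝓝 0) :=
    tendsto_zero_of_hasDerivAt_of_integrableOn_Ioi
      (fun y hy => (hK_deriv y hy).mul (hg y).hasDerivAt) (hK₂g_int.add hKg'_int)
      (integrableOn_mul_of_abs_le measurableSet_Ioi hgi hK_meas hK_bound)
  rw [integral_Ioi_mul_deriv_eq_deriv_mul hK_deriv (fun y _ => (hg y).hasDerivAt) hKg'_int
    hK₂g_int h_zero h_infty]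
  ring

lemma hasDerivAt_gammaTransform (hν : -1 ≤ ν) (hg : IntegrableOn g (Ioi 0)) (hx : 0 < x) :
    HasDerivAt (gammaTransform ν g)
      (x ^ (ν - 1) * ∫ y in Ioi 0, gammaKernelFlux ν x y * g y) x := by
  obtain ⟨C, hC⟩ := exists_abs_gammaKernel_le hν
  obtain ⟨C₁, hC₁⟩ := exists_abs_rpow_mul_gammaKernelFlux_le hν
  rw [← integral_const_mul]
  simp_rw [← mul_assoc]
  exact hasDerivAt_integral_Ioi_mul (K' := fun t y => t ^ (ν - 1) * gammaKernelFlux ν t y) hx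
    hg (fun t => measurable_gammaKernel.of_uncurry_left)
    (fun t => measurable_gammaKernelFlux.const_mul _) (fun y hy => hC x y hx hy) (hC₁ _)
    fun t y ht hy => hasDerivAt_gammaKernel_fst ht hy

lemma hasDerivAt_integral_gammaKernelFlux_mul (hν : -1 ≤ ν) (hg : IntegrableOn g (Ioi 0))
    (hx : 0 < x) :
    HasDerivAt (fun t => ∫ y in Ioi 0, gammaKernelFlux ν t y * g y)
      (x ^ (-ν) * ∫ y in Ioi 0, gammaKernelDerivSnd ν x y * g y) x := by
  obtain ⟨C₁, hC₁⟩ := exists_abs_rpow_mul_gammaKernelFlux_le hν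
  obtain ⟨C₂, hC₂⟩ := exists_abs_rpow_mul_gammaKernelDerivSnd_le (by linarith : -2 ≤ ν)
  rw [← integral_const_mul]
  simp_rw [← mul_assoc]
  exact hasDerivAt_integral_Ioi_mul (K' := fun t y => t ^ (-ν) * gammaKernelDerivSnd ν t y) hx
    hg (fun t => measurable_gammaKernelFlux)
    (fun t => measurable_gammaKernelDerivSnd.const_mul _)
    (fun y hy => by simpa using hC₁ 0 x y hx hy) (hC₂ _)
    fun t y ht hy => hasDerivAt_gammaKernelFlux_fst ht hy

lemma Dnu_gammaTransform (hν : -1 ≤ ν) (hg : Differentiable ℝ g)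
    (hgi : IntegrableOn g (Ioi 0)) (hg'i : IntegrableOn (deriv g) (Ioi 0)) (hx : 0 < x) :
    Dnu ν (gammaTransform ν g) x = gammaTransform ν (fun y => -deriv g y) x := by
  have h_flux : (fun t => t ^ (1 - ν) * deriv (gammaTransform ν g) t) =ᶠ[𝓝 x]
      fun t => ∫ y in Ioi 0, gammaKernelFlux ν t y * g y := by
    filter_upwards [lt_mem_nhds hx] with t ht
    rw [(hasDerivAt_gammaTransform hν hgi ht).deriv, ← mul_assoc, ← Real.rpow_add ht]
    simp
  rw [Dnu, h_flux.deriv_eq, (hasDerivAt_integral_gammaKernelFlux_mul hν hgi hx).deriv,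
    ← mul_assoc, ← Real.rpow_add hx, add_neg_cancel, Real.rpow_zero, one_mul,
    integral_gammaKernelDerivSnd_mul hν hx hg hgi hg'i, gammaTransform, ← integral_neg]
  simp only [mul_neg]

end Transform

lemma Set.EqOn.Dnu {ν : ℝ} {f g : ℝ → ℝ} {s : Set ℝ} (hfg : EqOn f g s) (hs : IsOpen s) :
    EqOn (Dnu ν f) (Dnu ν g) s := by
  have h_flux : EqOn (fun t => t ^ (1 - ν) * _root_.deriv f t)
      (fun t => t ^ (1 - ν) * _root_.deriv g t) s :=
    fun t ht => congrArg (t ^ (1 - ν) * ·) (hfg.deriv hs ht)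
  exact fun x hx => congrArg (x ^ ν * ·) (h_flux.deriv hs hx)

lemma eqOn_Dnu_iterate_gammaTransform {ν : ℝ} (hν : -1 ≤ ν) {f g : ℝ → ℝ} {l : ℕ}
    (hf : EqOn f (gammaTransform ν g) (Ioi 0))
    (hdiff : ∀ j < l, Differentiable ℝ (iteratedDeriv j g))
    (hint : ∀ j ≤ l, IntegrableOn (iteratedDeriv j g) (Ioi 0)) :
    EqOn ((Dnu ν)^[l] f) (gammaTransform ν fun y => (-1) ^ l * iteratedDeriv l g y) (Ioi 0) := by
  induction l with
  | zero => simpa using hf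
  | succ l ih =>
    intro x hx
    have h_deriv : deriv (fun y => (-1) ^ l * iteratedDeriv l g y) =
        fun y => (-1) ^ l * iteratedDeriv (l + 1) g y := by
      rw [deriv_const_mul_field', iteratedDeriv_succ]
    rw [Function.iterate_succ_apply',
      (ih (fun j hj => hdiff j (by omega)) fun j hj => hint j (by omega)).Dnu isOpen_Ioi hx,
      Dnu_gammaTransform hν ((hdiff l (by omega)).const_mul _) ((hint l (by omega)).const_mul _)
        (by rw [h_deriv]; exact (hint (l + 1) le_rfl).const_mul _) hx, h_deriv]
    simp only [pow_succ, neg_mul, mul_neg, mul_one]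

section Moments

variable {ν κ x y : ℝ}

lemma rpow_mul_gammaKernel_eq (hx : 0 < x) (hy : 0 < y) :
    x ^ (κ - 1) * gammaKernel ν x y =
      y ^ (-(ν + 1)) * (x ^ (ν + κ - 1) * Real.exp (-(y⁻¹ * x))) := by
  rw [gammaKernel, Real.div_rpow hx.le hy.le, Real.rpow_neg hy.le, Real.rpow_add_one hy.ne',
    show ν + κ - 1 = (κ - 1) + ν by ring, Real.rpow_add hx, inv_mul_eq_div]
  have := Real.rpow_pos_of_pos hy ν
  field_simp

lemma integrableOn_rpow_mul_gammaKernel (hνκ : 0 < ν + κ) (hy : 0 < y) :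
    IntegrableOn (fun x => x ^ (κ - 1) * gammaKernel ν x y) (Ioi 0) := by
  have h : IntegrableOn _ (Ioi (0 : ℝ)) :=
    (integrableOn_rpow_mul_exp_neg_mul_rpow (s := ν + κ - 1) (by linarith) one_pos
      (inv_pos.mpr hy)).const_mul (y ^ (-(ν + 1)))
  refine h.congr_fun (fun x hx => ?_) measurableSet_Ioi
  rw [rpow_mul_gammaKernel_eq hx hy]
  simp only [Real.rpow_one, neg_mul]

lemma integral_rpow_mul_gammaKernel (hνκ : 0 < ν + κ) (hy : 0 < y) :
    ∫ x in Ioi 0, x ^ (κ - 1) * gammaKernel ν x y = Real.Gamma (ν + κ) * y ^ (κ - 1) := by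
  rw [setIntegral_congr_fun measurableSet_Ioi fun x hx => rpow_mul_gammaKernel_eq hx hy,
    integral_const_mul, Real.integral_rpow_mul_exp_neg_mul_Ioi hνκ (inv_pos.mpr hy), one_div,
    inv_inv, ← mul_assoc, mul_comm _ (Real.Gamma _), ← Real.rpow_add hy]
  congr 2
  ring

end Moments

section Weighted

variable {ν κ : ℝ} {g : ℝ → ℝ}

lemma abs_gammaTransform_le {x : ℝ} (hx : 0 ≤ x) :
    |gammaTransform ν g x| ≤ gammaTransform ν (fun y => |g y|) x := by
  refine (norm_integral_le_integral_norm (μ := volume.restrict (Ioi 0))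
    fun y => gammaKernel ν x y * g y).trans_eq
    (setIntegral_congr_fun measurableSet_Ioi fun y (hy : 0 < y) => ?_)
  rw [Real.norm_eq_abs, abs_mul, abs_of_nonneg (gammaKernel_nonneg hx hy.le)]

lemma aestronglyMeasurable_gammaTransform
    (hg : AEStronglyMeasurable g (volume.restrict (Ioi 0))) :
    AEStronglyMeasurable (gammaTransform ν g) (volume.restrict (Ioi 0)) :=
  (measurable_gammaKernel.aestronglyMeasurable.mul
    (hg.comp_snd (μ := volume.restrict (Ioi 0)))).integral_prod_right'

lemma integrable_rpow_mul_gammaKernel_mul_abs (hνκ : 0 < ν + κ)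
    (hg : AEStronglyMeasurable g (volume.restrict (Ioi 0)))
    (hgw : IntegrableOn (fun y => y ^ (κ - 1) * |g y|) (Ioi 0)) :
    Integrable (Function.uncurry fun x y => x ^ (κ - 1) * gammaKernel ν x y * |g y|)
      ((volume.restrict (Ioi 0)).prod (volume.restrict (Ioi 0))) := by
  have h_meas : AEStronglyMeasurable
      (Function.uncurry fun x y => x ^ (κ - 1) * gammaKernel ν x y * |g y|)
      ((volume.restrict (Ioi 0)).prod (volume.restrict (Ioi 0))) :=
    ((measurable_fst.pow_const _).mul measurable_gammaKernel).aestronglyMeasurable.mul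
      hg.norm.comp_snd
  refine (integrable_prod_iff' h_meas).mpr ⟨?_, ?_⟩
  · exact (ae_restrict_iff' measurableSet_Ioi).mpr (ae_of_all _ fun y hy =>
      (integrableOn_rpow_mul_gammaKernel hνκ hy).mul_const |g y|)
  · refine (hgw.const_mul (Real.Gamma (ν + κ))).congr
      ((ae_restrict_iff' measurableSet_Ioi).mpr (ae_of_all _ fun y (hy : 0 < y) => ?_))
    show Real.Gamma (ν + κ) * (y ^ (κ - 1) * |g y|) =
      ∫ x in Ioi 0, ‖x ^ (κ - 1) * gammaKernel ν x y * |g y|‖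
    rw [setIntegral_congr_fun measurableSet_Ioi fun x (hx : 0 < x) => Real.norm_of_nonneg
      (by have := gammaKernel_nonneg (ν := ν) hx.le hy.le; positivity),
      integral_mul_const, integral_rpow_mul_gammaKernel hνκ hy]
    ring

lemma integrableOn_rpow_mul_gammaTransform_abs (hνκ : 0 < ν + κ)
    (hg : AEStronglyMeasurable g (volume.restrict (Ioi 0)))
    (hgw : IntegrableOn (fun y => y ^ (κ - 1) * |g y|) (Ioi 0)) :
    IntegrableOn (fun x => x ^ (κ - 1) * gammaTransform ν (fun y => |g y|) x) (Ioi 0) := by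
  refine (integrable_rpow_mul_gammaKernel_mul_abs hνκ hg hgw).integral_prod_left.congr
    (ae_of_all _ fun x => ?_)
  simp only [Function.uncurry_apply_pair, gammaTransform, ← integral_const_mul, mul_assoc]

lemma integral_rpow_mul_gammaTransform_abs (hνκ : 0 < ν + κ)
    (hg : AEStronglyMeasurable g (volume.restrict (Ioi 0)))
    (hgw : IntegrableOn (fun y => y ^ (κ - 1) * |g y|) (Ioi 0)) :
    ∫ x in Ioi 0, x ^ (κ - 1) * gammaTransform ν (fun y => |g y|) x =
      Real.Gamma (ν + κ) * ∫ y in Ioi 0, y ^ (κ - 1) * |g y| := by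
  simp only [gammaTransform, ← integral_const_mul, ← mul_assoc]
  rw [integral_integral_swap (integrable_rpow_mul_gammaKernel_mul_abs hνκ hg hgw)]
  refine setIntegral_congr_fun measurableSet_Ioi fun y hy => ?_
  rw [integral_mul_const, integral_rpow_mul_gammaKernel hνκ hy]

lemma integrableOn_rpow_mul_abs_gammaTransform (hνκ : 0 < ν + κ)
    (hg : AEStronglyMeasurable g (volume.restrict (Ioi 0)))
    (hgw : IntegrableOn (fun y => y ^ (κ - 1) * |g y|) (Ioi 0)) :
    IntegrableOn (fun x => x ^ (κ - 1) * |gammaTransform ν g x|) (Ioi 0) := by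
  refine (integrableOn_rpow_mul_gammaTransform_abs hνκ hg hgw).mono'
    (((measurable_id.pow_const _).aestronglyMeasurable).mul
      (aestronglyMeasurable_gammaTransform hg).norm)
    ((ae_restrict_iff' measurableSet_Ioi).mpr (ae_of_all _ fun x (hx : 0 < x) => ?_))
  rw [Real.norm_eq_abs, abs_mul, abs_abs, abs_of_nonneg (Real.rpow_nonneg hx.le _)]
  exact mul_le_mul_of_nonneg_left (abs_gammaTransform_le hx.le) (Real.rpow_nonneg hx.le _)

lemma integral_rpow_mul_abs_gammaTransform_le (hνκ : 0 < ν + κ)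
    (hg : AEStronglyMeasurable g (volume.restrict (Ioi 0)))
    (hgw : IntegrableOn (fun y => y ^ (κ - 1) * |g y|) (Ioi 0)) :
    ∫ x in Ioi 0, x ^ (κ - 1) * |gammaTransform ν g x| ≤
      Real.Gamma (ν + κ) * ∫ y in Ioi 0, y ^ (κ - 1) * |g y| := by
  rw [← integral_rpow_mul_gammaTransform_abs hνκ hg hgw]
  refine setIntegral_mono_on (integrableOn_rpow_mul_abs_gammaTransform hνκ hg hgw)
    (integrableOn_rpow_mul_gammaTransform_abs hνκ hg hgw) measurableSet_Ioi
    fun x (hx : 0 < x) => ?_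
  exact mul_le_mul_of_nonneg_left (abs_gammaTransform_le hx.le) (Real.rpow_nonneg hx.le _)

end Weighted

lemma integrableOn_rpow_mul_abs_Dnu_iterate_and_integral_le {ν κ : ℝ} (hν : -1 ≤ ν)
    (hνκ : 0 < ν + κ) {f g : ℝ → ℝ} {l : ℕ} (hf : EqOn f (gammaTransform ν g) (Ioi 0))
    (hdiff : ∀ j < l, Differentiable ℝ (iteratedDeriv j g))
    (hint : ∀ j ≤ l, IntegrableOn (iteratedDeriv j g) (Ioi 0))
    (hw : IntegrableOn (fun y => y ^ (κ - 1) * |iteratedDeriv l g y|) (Ioi 0)) :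
    IntegrableOn (fun x => x ^ (κ - 1) * |(Dnu ν)^[l] f x|) (Ioi 0) ∧
      ∫ x in Ioi 0, x ^ (κ - 1) * |(Dnu ν)^[l] f x| ≤
        Real.Gamma (ν + κ) * ∫ y in Ioi 0, y ^ (κ - 1) * |iteratedDeriv l g y| := by
  have h_rep := eqOn_Dnu_iterate_gammaTransform hν hf hdiff hint
  have h_abs : ∀ y, |(-1) ^ l * iteratedDeriv l g y| = |iteratedDeriv l g y| := by
    simp [abs_mul]
  have hφ := (hint l le_rfl).aestronglyMeasurable.const_mul ((-1 : ℝ) ^ l)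
  have hφw : IntegrableOn (fun y => y ^ (κ - 1) * |(-1) ^ l * iteratedDeriv l g y|) (Ioi 0) :=
    by simpa only [h_abs] using hw
  have h_congr : EqOn (fun x => x ^ (κ - 1) * |(Dnu ν)^[l] f x|)
      (fun x => x ^ (κ - 1) * |gammaTransform ν (fun y => (-1) ^ l * iteratedDeriv l g y) x|)
      (Ioi 0) := fun x hx => by simp only [h_rep hx]
  refine ⟨(integrableOn_rpow_mul_abs_gammaTransform hνκ hφ hφw).congr_fun h_congr.symm
    measurableSet_Ioi, ?_⟩
  rw [setIntegral_congr_fun measurableSet_Ioi h_congr]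
  simpa only [h_abs] using integral_rpow_mul_abs_gammaTransform_le hνκ hφ hφw

theorem integrability_of_Dnu_iterate_gammaTransform_general
    (n : ℕ) (hn : 2 ≤ n) (ν : ℝ)
    (hν : (∃ k : ℕ, ν = k) ∨ ν = -(1/2) ∨ ν = 1/2)
    (tω : ℝ → ℝ)
    (hdiff : ∀ j : ℕ, j < n - 1 → Differentiable ℝ (iteratedDeriv j tω))
    (hint : ∀ κ : ℝ, 1 ≤ κ → κ ≤ n → ∀ j : ℕ, j ≤ n - 1 →
      Integrable (fun x : ℝ => |x| ^ (κ - 1) * |iteratedDeriv j tω x|))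
    (ω : ℝ → ℝ)
    (hω : ∀ x : ℝ, 0 < x →
      ω x = (1 / Real.Gamma (ν + 1)) *
        ∫ y in Set.Ioi (0:ℝ), (x / y) ^ ν * Real.exp (-(x / y)) * tω y / y) :
    ∀ κ : ℝ, 1 ≤ κ → κ ≤ n → ∀ l : ℕ, l ≤ n - 1 →
      IntegrableOn (fun x : ℝ => x ^ (κ - 1) * |((Dnu ν)^[l] ω) x|) (Set.Ioi 0) ∧
      (∫ x in Set.Ioi (0:ℝ), x ^ (κ - 1) * |((Dnu ν)^[l] ω) x|) ≤
        (Real.Gamma (ν + κ) / Real.Gamma (ν + 1)) *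
          ∫ y in Set.Ioi (0:ℝ), y ^ (κ - 1) * |iteratedDeriv l tω y| := by
  intro κ hκ hκn l hl
  have hν₁ : -1 < ν := by
    rcases hν with ⟨k, rfl⟩ | rfl | rfl <;> norm_num
    linarith [k.cast_nonneg (α := ℝ)]
  set c := 1 / Real.Gamma (ν + 1)
  have hc : 0 < c := one_div_pos.mpr (Real.Gamma_pos_of_pos (by linarith))
  have h_meas : ∀ j, Measurable (iteratedDeriv j tω)
    | 0 => (hdiff 0 (by omega)).continuous.measurable
    | j + 1 => by rw [iteratedDeriv_succ]; exact measurable_deriv _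
  have h_weighted : ∀ κ : ℝ, 1 ≤ κ → κ ≤ n → ∀ j ≤ n - 1,
      IntegrableOn (fun y => y ^ (κ - 1) * |iteratedDeriv j tω y|) (Ioi 0) :=
    fun κ hκ hκn j hj => (hint κ hκ hκn j hj).integrableOn.congr_fun
      (fun y (hy : 0 < y) => by simp only [abs_of_pos hy]) measurableSet_Ioi
  have h_int : ∀ j ≤ n - 1, IntegrableOn (iteratedDeriv j tω) (Ioi 0) := fun j hj => by
    have h := h_weighted 1 le_rfl (by linarith) j hj
    simp only [sub_self, Real.rpow_zero, one_mul] at h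
    exact (integrable_norm_iff (h_meas j).aestronglyMeasurable).mp h
  have h_iteratedDeriv : ∀ j, iteratedDeriv j (fun y => c * tω y) =
      fun y => c * iteratedDeriv j tω y :=
    fun j => funext fun y => iteratedDeriv_const_mul_field c tω
  have h_ω : EqOn ω (gammaTransform ν fun y => c * tω y) (Ioi 0) :=
    fun x hx => (hω x hx).trans (gammaTransform_const_mul c).symm
  obtain ⟨h_integrable, h_le⟩ := integrableOn_rpow_mul_abs_Dnu_iterate_and_integral_le
    (κ := κ) (l := l) hν₁.le (by linarith) h_ω
    (fun j hj => by rw [h_iteratedDeriv]; exact (hdiff j (by omega)).const_mul c)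
    (fun j hj => by rw [h_iteratedDeriv]; exact (h_int j (by omega)).const_mul c)
    (by
      simp only [h_iteratedDeriv, abs_mul, abs_of_pos hc, mul_left_comm _ c]
      exact (h_weighted κ hκ hκn l hl).const_mul c)
  refine ⟨h_integrable, h_le.trans_eq ?_⟩
  simp only [h_iteratedDeriv, abs_mul, abs_of_pos hc, mul_left_comm _ c, integral_const_mul]
  ring

/-- for `ω̃ ∈ L¹_{H₂}(ℝ)` supported in `[0,∞)` and
`ω(x) = (1/Γ(ν+1)) ∫₀^∞ (x/y)^ν e^{−x/y} ω̃(y) y⁻¹ dy`, one has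
`∫₀^∞ x^{κ−1} |(D_ν^l ω)(x)| dx ≤ (Γ(ν+κ)/Γ(ν+1)) ∫₀^∞ y^{κ−1} |ω̃^{(l)}(y)| dy < ∞`. -/
theorem integrability_of_Dnu_iterate_gammaTransform
    (n : ℕ) (hn : 2 ≤ n) (ν : ℝ)
    (hν : (∃ k : ℕ, ν = k) ∨ ν = -(1/2) ∨ ν = 1/2)
    (tω : ℝ → ℝ)
    (hpos : ∀ x : ℝ, 0 ≤ tω x)
    (hdiff : ∀ j : ℕ, j < n - 1 → Differentiable ℝ (iteratedDeriv j tω))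
    (hint : ∀ κ : ℝ, 1 ≤ κ → κ ≤ n → ∀ j : ℕ, j ≤ n - 1 →
      Integrable (fun x : ℝ => |x| ^ (κ - 1) * |iteratedDeriv j tω x|))
    (hsupp : ∀ x : ℝ, x < 0 → tω x = 0)
    (ω : ℝ → ℝ)
    (hω : ∀ x : ℝ, 0 < x →
      ω x = (1 / Real.Gamma (ν + 1)) *
        ∫ y in Set.Ioi (0:ℝ), (x / y) ^ ν * Real.exp (-(x / y)) * tω y / y) :
    ∀ κ : ℝ, 1 ≤ κ → κ ≤ n → ∀ l : ℕ, l ≤ n - 1 →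
      IntegrableOn (fun x : ℝ => x ^ (κ - 1) * |((Dnu ν)^[l] ω) x|) (Set.Ioi 0) ∧
      (∫ x in Set.Ioi (0:ℝ), x ^ (κ - 1) * |((Dnu ν)^[l] ω) x|) ≤
        (Real.Gamma (ν + κ) / Real.Gamma (ν + 1)) *
          ∫ y in Set.Ioi (0:ℝ), y ^ (κ - 1) * |iteratedDeriv l tω y| :=
  integrability_of_Dnu_iterate_gammaTransform_general n hn ν hν tω hdiff hint ω hω
end

section
/- Let n ≥ 1, let ω belong to the class L¹_{H₂}(ℝ) for n with ∫_ℝ ω > 0, and suppose p(a) = C_n[ω]·Δ_n(a)·det[(−1)^{b−1}·ω^{(b−1)}(a_c)]_{b,c=1,…,n} is a probability density on ℝ^n, where C_n[ω] is the normalization constant. Then C_n[ω] = ∏_{j=1}^n 1/(j!·ω̂(0)), and for every s ∈ ℝ^n with pairwise distinct entries: (∏_{j=0}^{n−1} j!) · ∫_{ℝ^n} p(a) · det[exp(i·a_b·s_c)]_{b,c=1,…,n} / ( Δ_n(i·s) · Δ_n(a) ) da = ∏_{j=1}^n ω̂(s_j)/ω̂(0), where ω̂(s) = ∫_ℝ ω(x)·e^{i·x·s}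 dx (so ω̂(0) = ∫_ℝ ω). -/
/-!
Both claims rest on Andréief's identity
`∫ det[f_b(a_c)] · det[g_b(a_c)] da = n! · det[∫ f_b g_c]`.
Since `Δ_n(a) = det[a_c^b]`, the total mass of the density is `C · n!` times the determinant of
the moment matrix `∫ x^b (-1)^c ω^{(c)}(x) dx`. Integrating by parts, these moments vanish for
`b < c` and equal `b! · ω̂(0)` for `b = c`, so the matrix is triangular and `C` follows.
In the Fourier integral the factor `Δ_n(a)` of the density cancels, and Andréief's identity for
`(-1)^b ω^{(b)}` against `e^{i x s_c}` leaves the matrix `[(i s_c)^b ω̂(s_c)]`, again by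
integration by parts; its determinant is `Δ_n(i s) · ∏ ω̂(s_c)`.
-/

open MeasureTheory Finset

/-- The Vandermonde determinant `Δ_m(a) = ∏_{1 ≤ b < c ≤ m} (a_c − a_b)`. -/
noncomputable def vdm {m : ℕ} (a : Fin m → ℝ) : ℝ :=
  ∏ p ∈ Finset.univ.filter (fun p : Fin m × Fin m => p.1 < p.2), (a p.2 - a p.1)

/-- The complex Vandermonde determinant. -/
noncomputable def vdmC {m : ℕ} (a : Fin m → ℂ) : ℂ :=
  ∏ p ∈ Finset.univ.filter (fun p : Fin m × Fin m => p.1 < p.2), (a p.2 - a p.1)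

/-- The Fourier transform `ω̂(s) = ∫_ℝ ω(x)·e^{i·x·s} dx`. -/
noncomputable def fourierT (w : ℝ → ℝ) (s : ℝ) : ℂ :=
  ∫ x : ℝ, (w x : ℂ) * Complex.exp (Complex.I * x * s)

section Vandermonde

variable {R : Type*} [CommRing R] {m : ℕ}

theorem prod_filter_lt_sub_eq_det_vandermonde (a : Fin m → R) :
    ∏ p ∈ univ.filter (fun p : Fin m × Fin m => p.1 < p.2), (a p.2 - a p.1)
      = (Matrix.vandermonde a).det := by
  rw [Matrix.det_vandermonde, prod_filter, ← univ_product_univ, prod_product]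
  refine prod_congr rfl fun i _ => ?_
  rw [← prod_filter, filter_lt_eq_Ioi]

theorem vdm_eq_det_vandermonde (a : Fin m → ℝ) : vdm a = (Matrix.vandermonde a).det :=
  prod_filter_lt_sub_eq_det_vandermonde a

theorem vdmC_eq_det_vandermonde (a : Fin m → ℂ) : vdmC a = (Matrix.vandermonde a).det :=
  prod_filter_lt_sub_eq_det_vandermonde a

theorem vdm_eq_det_pow (a : Fin m → ℝ) :
    vdm a = (Matrix.of fun b c : Fin m => a c ^ (b : ℕ)).det := by
  rw [vdm_eq_det_vandermonde, ← Matrix.det_transpose]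
  rfl

theorem vdmC_eq_det_pow (a : Fin m → ℂ) :
    vdmC a = (Matrix.of fun b c : Fin m => a c ^ (b : ℕ)).det := by
  rw [vdmC_eq_det_vandermonde, ← Matrix.det_transpose]
  rfl

end Vandermonde

section Andreief

variable {𝕜 α ι : Type*} [RCLike 𝕜] [MeasurableSpace α] {μ : Measure α} [SigmaFinite μ]
  [Fintype ι] [DecidableEq ι]

theorem integrable_det_of_columns (h : ι → ι → α → 𝕜) (hh : ∀ b c, Integrable (h b c) μ) :
    Integrable (fun a => (Matrix.of fun b c => h b c (a c)).det) (Measure.pi fun _ => μ) := by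
  simp only [Matrix.det_apply', Matrix.of_apply]
  exact integrable_finsetSum _ fun σ _ => (Integrable.fintype_prod fun c => hh (σ c) c).const_mul _

theorem integral_det_of_columns (h : ι → ι → α → 𝕜) (hh : ∀ b c, Integrable (h b c) μ) :
    ∫ a, (Matrix.of fun b c => h b c (a c)).det ∂(Measure.pi fun _ => μ)
      = (Matrix.of fun b c => ∫ x, h b c x ∂μ).det := by
  simp only [Matrix.det_apply', Matrix.of_apply]
  rw [integral_finsetSum _ fun σ _ => (Integrable.fintype_prod fun c => hh (σ c) c).const_mul _]
  refine sum_congr rfl fun σ _ => ?_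
  rw [integral_const_mul, integral_fintype_prod_eq_prod (fun c x => h (σ c) c x)]

/-- Andréief's identity. -/
theorem integral_det_mul_det (f g : ι → α → 𝕜)
    (hfg : ∀ b c, Integrable (fun x => f b x * g c x) μ) :
    ∫ a, (Matrix.of fun b c => f b (a c)).det * (Matrix.of fun b c => g b (a c)).det
        ∂(Measure.pi fun _ => μ)
      = (Fintype.card ι).factorial * (Matrix.of fun b c => ∫ x, f b x * g c x ∂μ).det := by
  have hexpand : ∀ a : ι → α,
      (Matrix.of fun b c => f b (a c)).det * (Matrix.of fun b c => g b (a c)).det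
        = ∑ τ : Equiv.Perm ι, (Equiv.Perm.sign τ : 𝕜) *
            (Matrix.of fun b c => f b (a c) * g (τ c) (a c)).det := by
    intro a
    rw [Matrix.det_apply' (Matrix.of fun b c => g b (a c)), mul_sum]
    refine sum_congr rfl fun τ _ => ?_
    have hrow := Matrix.det_mul_row (fun c => g (τ c) (a c)) (Matrix.of fun b c => f b (a c))
    simp only [Matrix.of_apply] at hrow
    simp only [Matrix.of_apply, mul_comm (f _ _), hrow]
    ring
  set M := Matrix.of fun b c => ∫ x, f b x * g c x ∂μ
  have hterm : ∀ τ : Equiv.Perm ι,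
      ∫ a, (Equiv.Perm.sign τ : 𝕜) * (Matrix.of fun b c => f b (a c) * g (τ c) (a c)).det
        ∂(Measure.pi fun _ => μ) = M.det := by
    intro τ
    rw [integral_const_mul, integral_det_of_columns _ fun b c => hfg b (τ c)]
    have hperm : (Matrix.of fun b c => ∫ x, f b x * g (τ c) x ∂μ) = M.submatrix id τ := rfl
    rw [hperm, Matrix.det_permute', ← mul_assoc, ← Int.cast_mul, ← Units.val_mul,
      Int.units_mul_self, Units.val_one, Int.cast_one, one_mul]
  simp only [hexpand]
  rw [integral_finsetSum _ fun τ _ =>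
    (integrable_det_of_columns _ fun b c => hfg b (τ c)).const_mul _]
  simp only [hterm, sum_const, card_univ, Fintype.card_perm, nsmul_eq_mul]

end Andreief

theorem integral_pow_succ_mul_deriv_eq {f f' : ℝ → ℝ} (k : ℕ) (hf : ∀ x, HasDerivAt f (f' x) x)
    (hf₁ : Integrable fun x => x ^ (k + 1) * f x) (hf'₁ : Integrable fun x => x ^ (k + 1) * f' x)
    (hf₀ : Integrable fun x => x ^ k * f x) :
    ∫ x, x ^ (k + 1) * f' x = -((k + 1) * ∫ x, x ^ k * f x) := by
  have hpow : ∀ x : ℝ, HasDerivAt (fun y => y ^ (k + 1)) ((k + 1) * x ^ k) x := fun x => by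
    simpa using hasDerivAt_pow (k + 1) x
  rw [integral_mul_deriv_eq_deriv_mul_of_integrable (fun x _ => hpow x) (fun x _ => hf x) hf'₁
    ((hf₀.const_mul (k + 1)).congr (.of_forall fun x => by simp [mul_assoc])) hf₁]
  simp only [mul_assoc, integral_const_mul]

theorem integrable_ofReal_mul_cexp {g : ℝ → ℝ} (hg : Integrable g) (s : ℝ) :
    Integrable fun x : ℝ => (g x : ℂ) * Complex.exp (Complex.I * x * s) := by
  refine hg.ofReal.mul_bdd (c := 1) (by fun_prop) (.of_forall fun x => ?_)
  simp [Complex.norm_exp, Complex.mul_re]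

theorem integral_deriv_mul_cexp_eq {f f' : ℝ → ℝ} (hf : ∀ x, HasDerivAt f (f' x) x)
    (hf₁ : Integrable f) (hf'₁ : Integrable f') (s : ℝ) :
    ∫ x : ℝ, (f' x : ℂ) * Complex.exp (Complex.I * x * s)
      = -(Complex.I * s) * ∫ x : ℝ, (f x : ℂ) * Complex.exp (Complex.I * x * s) := by
  have hexp : ∀ x : ℝ, HasDerivAt (fun y : ℝ => Complex.exp (Complex.I * y * s))
      (Complex.I * s * Complex.exp (Complex.I * x * s)) x := fun x => by
    simpa [mul_comm, mul_assoc, mul_left_comm] using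
      ((((hasDerivAt_id (x : ℂ)).const_mul Complex.I).mul_const (s : ℂ)).cexp).comp_ofReal
  have hprod : ∀ x : ℝ, HasDerivAt (fun y : ℝ => (f y : ℂ)) (f' x : ℂ) x :=
    fun x => (hf x).ofReal_comp
  have hf₁s := integrable_ofReal_mul_cexp hf₁ s
  have hibp := integral_mul_deriv_eq_deriv_mul_of_integrable (fun x _ => hprod x)
    (fun x _ => hexp x) ((hf₁s.const_mul (Complex.I * s)).congr (.of_forall fun x => by
      simp only [Pi.mul_apply]; ring)) (integrable_ofReal_mul_cexp hf'₁ s) hf₁s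
  simp only [mul_left_comm _ (Complex.I * s), integral_const_mul] at hibp
  rw [neg_mul, hibp, neg_neg]

theorem Nat.superFactorial_eq_factorial_mul_prod_range (n : ℕ) :
    n.superFactorial = n.factorial * ∏ j ∈ range n, j.factorial := by
  rw [← Nat.prod_range_succ_factorial, prod_range_succ, mul_comm]

theorem fourierT_zero (w : ℝ → ℝ) : fourierT w 0 = ((∫ x, w x : ℝ) : ℂ) := by
  simpa [fourierT] using integral_ofReal (𝕜 := ℂ)

/-- Row `k` of the Pólya ensemble matrix (row `k + 1` in the paper's one-based indexing). -/
noncomputable def signedIteratedDeriv (k : ℕ) (ω : ℝ → ℝ) (x : ℝ) : ℝ :=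
  (-1) ^ k * iteratedDeriv k ω x

/-- Polynomial-moment form of the paper's class `L¹_{H₂}(ℝ)`. -/
structure DerivMomentsIntegrable (n : ℕ) (ω : ℝ → ℝ) : Prop where
  differentiable : ∀ j, j + 1 < n → Differentiable ℝ (iteratedDeriv j ω)
  integrable : ∀ b c, b < n → c < n → Integrable fun x => x ^ b * iteratedDeriv c ω x

namespace DerivMomentsIntegrable

variable {n : ℕ} {ω : ℝ → ℝ}

theorem of_integrable_abs_rpow_mul (hpos : ∀ x, 0 ≤ ω x)
    (hdiff : ∀ j : ℕ, j < n - 1 → Differentiable ℝ (iteratedDeriv j ω))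
    (hint : ∀ κ : ℝ, 1 ≤ κ → κ ≤ n → ∀ j : ℕ, j ≤ n - 1 →
      Integrable (fun x : ℝ => |x| ^ (κ - 1) * |iteratedDeriv j ω x|)) :
    DerivMomentsIntegrable n ω where
  differentiable j hj := hdiff j (by omega)
  integrable b c hb hc := by
    have habs (k : ℕ) (hk : k < n) (j : ℕ) (hj : j < n) :
        Integrable fun x : ℝ => |x| ^ k * |iteratedDeriv j ω x| := by
      simpa using hint (k + 1) (by simp) (by exact_mod_cast hk) j (by omega)
    have hmeas : AEStronglyMeasurable (iteratedDeriv c ω) := by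
      cases c with
      | zero =>
        have := habs 0 (by omega) 0 (by omega)
        simp only [pow_zero, one_mul, iteratedDeriv_zero, abs_of_nonneg (hpos _)] at this
        simpa using this.aestronglyMeasurable
      | succ k =>
        rw [iteratedDeriv_succ]
        exact (measurable_deriv _).aestronglyMeasurable
    refine (habs b hb c hc).mono' ((continuous_pow b).aestronglyMeasurable.mul hmeas)
      (.of_forall fun x => ?_)
    simp

theorem integrable_iteratedDeriv (hω : DerivMomentsIntegrable n ω) {c : ℕ} (hc : c < n) :
    Integrable (iteratedDeriv c ω) := by
  simpa using hω.integrable 0 c (by omega) hc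

theorem hasDerivAt_iteratedDeriv (hω : DerivMomentsIntegrable n ω) {j : ℕ} (hj : j + 1 < n)
    (x : ℝ) : HasDerivAt (iteratedDeriv j ω) (iteratedDeriv (j + 1) ω x) x := by
  rw [iteratedDeriv_succ]
  exact (hω.differentiable j hj x).hasDerivAt

theorem integral_pow_mul_iteratedDeriv_of_lt (hω : DerivMomentsIntegrable n ω) {b c : ℕ}
    (hbc : b < c) (hc : c < n) : ∫ x, x ^ b * iteratedDeriv c ω x = 0 := by
  obtain ⟨c, rfl⟩ : ∃ c', c = c' + 1 := ⟨c - 1, by omega⟩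
  induction b generalizing c with
  | zero =>
    simpa using integral_eq_zero_of_hasDerivAt_of_integrable (hω.hasDerivAt_iteratedDeriv hc)
      (hω.integrable_iteratedDeriv hc) (hω.integrable_iteratedDeriv (c := c) (by omega))
  | succ b ih =>
    obtain ⟨c, rfl⟩ : ∃ c', c = c' + 1 := ⟨c - 1, by omega⟩
    rw [integral_pow_succ_mul_deriv_eq b (hω.hasDerivAt_iteratedDeriv hc)
      (hω.integrable _ _ (by omega) (by omega)) (hω.integrable _ _ (by omega) hc)
      (hω.integrable _ _ (by omega) (by omega)), ih c (by omega) (by omega)]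
    simp

theorem integral_pow_mul_signedIteratedDeriv_self (hω : DerivMomentsIntegrable n ω) {b : ℕ}
    (hb : b < n) : ∫ x, x ^ b * signedIteratedDeriv b ω x = b.factorial * ∫ x, ω x := by
  induction b with
  | zero => simp [signedIteratedDeriv]
  | succ b ih =>
    have hibp := integral_pow_succ_mul_deriv_eq b (hω.hasDerivAt_iteratedDeriv hb)
      (hω.integrable _ _ (by omega) (by omega)) (hω.integrable _ _ hb hb)
      (hω.integrable _ _ (by omega) (by omega))
    simp only [signedIteratedDeriv, mul_left_comm _ ((-1 : ℝ) ^ _), integral_const_mul]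
      at ih ⊢
    rw [hibp, Nat.factorial_succ]
    push_cast
    linear_combination (b + 1 : ℝ) * ih (by omega)

theorem integral_signedIteratedDeriv_mul_cexp (hω : DerivMomentsIntegrable n ω) {c : ℕ}
    (hc : c < n) (s : ℝ) :
    ∫ x : ℝ, (signedIteratedDeriv c ω x : ℂ) * Complex.exp (Complex.I * x * s)
      = (Complex.I * s) ^ c * fourierT ω s := by
  induction c with
  | zero => simp [signedIteratedDeriv, fourierT]
  | succ c ih =>
    have hibp := integral_deriv_mul_cexp_eq (hω.hasDerivAt_iteratedDeriv hc)
      (hω.integrable_iteratedDeriv (c := c) (by omega)) (hω.integrable_iteratedDeriv hc) s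
    simp only [signedIteratedDeriv, Complex.ofReal_mul, Complex.ofReal_pow, Complex.ofReal_neg,
      Complex.ofReal_one, mul_assoc ((-1 : ℂ) ^ _), integral_const_mul] at ih ⊢
    rw [hibp]
    linear_combination (Complex.I * s) * ih (by omega)

end DerivMomentsIntegrable

section PolyaEnsemble

variable {n : ℕ}

theorem det_of_columns_eq_zero_of_vdm_eq_zero {R : Type*} [CommRing R] (F : Fin n → ℝ → R)
    {a : Fin n → ℝ} (ha : vdm a = 0) : (Matrix.of fun b c => F b (a c)).det = 0 := by
  obtain ⟨i, j, hij, hne⟩ := Matrix.det_vandermonde_eq_zero_iff.1 (vdm_eq_det_vandermonde a ▸ ha)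
  exact Matrix.det_zero_of_column_eq hne fun b => by simp [hij]

theorem vdmC_I_mul_ne_zero {s : Fin n → ℝ} (hs : Function.Injective s) :
    vdmC (fun j => Complex.I * s j) ≠ 0 := by
  rw [vdmC_eq_det_vandermonde, Ne, Matrix.det_vandermonde_eq_zero_iff]
  rintro ⟨i, j, hij, hne⟩
  exact hne (hs (by simpa using hij))

theorem integral_polyaEnsemble_eq {ω : ℝ → ℝ} (hω : DerivMomentsIntegrable n ω) {C : ℝ}
    {p : (Fin n → ℝ) → ℝ}
    (hp : ∀ a, p a = C * vdm a * (Matrix.of fun b c : Fin n => signedIteratedDeriv b ω (a c)).det) :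
    ∫ a, p a = C * (n.superFactorial * (∫ x, ω x) ^ n) := by
  simp only [hp, mul_assoc, integral_const_mul, vdm_eq_det_pow]
  rw [volume_pi, integral_det_mul_det (fun (b : Fin n) x => x ^ (b : ℕ))
    (fun (c : Fin n) x => signedIteratedDeriv c ω x)
    fun b c => by simpa [signedIteratedDeriv, mul_left_comm] using
      (hω.integrable b c b.isLt c.isLt).const_mul ((-1) ^ (c : ℕ))]
  rw [Fintype.card_fin, Matrix.det_of_isLowerTriangular _ fun b c (hbc : b < c) => ?_]
  · simp only [Matrix.of_apply, hω.integral_pow_mul_signedIteratedDeriv_self (Fin.is_lt _),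
      prod_mul_distrib, prod_const, card_univ, Fintype.card_fin,
      Fin.prod_univ_eq_prod_range (fun j => (j.factorial : ℝ))]
    rw [Nat.superFactorial_eq_factorial_mul_prod_range]
    push_cast
    ring
  · simp [signedIteratedDeriv, mul_left_comm _ ((-1 : ℝ) ^ _), integral_const_mul,
      hω.integral_pow_mul_iteratedDeriv_of_lt hbc c.isLt]

theorem integral_polyaEnsemble_mul_det_cexp_div_eq {ω : ℝ → ℝ}
    (hω : DerivMomentsIntegrable n ω) {C : ℝ} {p : (Fin n → ℝ) → ℝ}
    (hp : ∀ a, p a = C * vdm a * (Matrix.of fun b c : Fin n => signedIteratedDeriv b ω (a c)).det)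
    {s : Fin n → ℝ} (hs : Function.Injective s) :
    ∫ a : Fin n → ℝ, (p a : ℂ) *
          (Matrix.of fun b c : Fin n => Complex.exp (Complex.I * a b * s c)).det /
          (vdmC (fun j => Complex.I * s j) * vdm a)
      = C * (n.factorial * ∏ j, fourierT ω (s j)) := by
  set Δ := vdmC (fun j => Complex.I * s j)
  have hΔ : Δ ≠ 0 := vdmC_I_mul_ne_zero hs
  have hpoint : ∀ a : Fin n → ℝ,
      (p a : ℂ) * (Matrix.of fun b c : Fin n => Complex.exp (Complex.I * a b * s c)).det /
          (Δ * vdm a)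
        = C / Δ * ((Matrix.of fun b c : Fin n => (signedIteratedDeriv b ω (a c) : ℂ)).det *
            (Matrix.of fun b c : Fin n => Complex.exp (Complex.I * a c * s b)).det) := by
    intro a
    have hE : (Matrix.of fun b c : Fin n => Complex.exp (Complex.I * a b * s c)).det
        = (Matrix.of fun b c : Fin n => Complex.exp (Complex.I * a c * s b)).det := by
      rw [← Matrix.det_transpose]
      rfl
    have hG : ((Matrix.of fun b c : Fin n => signedIteratedDeriv b ω (a c)).det : ℂ)
        = (Matrix.of fun b c : Fin n => (signedIteratedDeriv b ω (a c) : ℂ)).det :=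
      RingHom.map_det Complex.ofRealHom _
    -- Where `vdm a = 0` the division is junk, but two columns of the derivative matrix agree.
    by_cases ha : vdm a = 0
    · simp [hp, ha, det_of_columns_eq_zero_of_vdm_eq_zero
        (fun (b : Fin n) x => (signedIteratedDeriv b ω x : ℂ)) ha]
    · have ha' : (vdm a : ℂ) ≠ 0 := Complex.ofReal_ne_zero.2 ha
      rw [hE, hp, Complex.ofReal_mul, Complex.ofReal_mul, hG]
      field_simp
  simp only [hpoint]
  rw [integral_const_mul, volume_pi,
    integral_det_mul_det (fun (b : Fin n) x => (signedIteratedDeriv b ω x : ℂ))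
      (fun (c : Fin n) x => Complex.exp (Complex.I * x * s c))
      fun b c => integrable_ofReal_mul_cexp
        ((hω.integrable_iteratedDeriv b.isLt).const_mul ((-1) ^ (b : ℕ))) (s c)]
  simp only [hω.integral_signedIteratedDeriv_mul_cexp (Fin.is_lt _), mul_comm _ (fourierT ω _)]
  have hrow := Matrix.det_mul_row (fun c => fourierT ω (s c))
    (Matrix.of fun b c : Fin n => (Complex.I * s c) ^ (b : ℕ))
  simp only [Matrix.of_apply] at hrow
  rw [hrow, ← vdmC_eq_det_pow, Fintype.card_fin]
  field_simp
  ring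

end PolyaEnsemble

theorem fourierTransform_polyaEnsemble_hermitian_general
    (n : ℕ) (ω : ℝ → ℝ)
    (hpos : ∀ x : ℝ, 0 ≤ ω x)
    (hdiff : ∀ j : ℕ, j < n - 1 → Differentiable ℝ (iteratedDeriv j ω))
    (hint : ∀ κ : ℝ, 1 ≤ κ → κ ≤ n → ∀ j : ℕ, j ≤ n - 1 →
      Integrable (fun x : ℝ => |x| ^ (κ - 1) * |iteratedDeriv j ω x|))
    (hω0 : 0 < ∫ x : ℝ, ω x)
    (C : ℝ) (p : (Fin n → ℝ) → ℝ)
    (hp : ∀ a : Fin n → ℝ,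
      p a = C * vdm a * Matrix.det (Matrix.of fun b c : Fin n =>
        (-1 : ℝ) ^ (b : ℕ) * iteratedDeriv (b : ℕ) ω (a c)))
    (hp1 : ∫ a : Fin n → ℝ, p a = 1) :
    (C : ℂ) = (∏ j ∈ Finset.Icc 1 n, 1 / ((j.factorial : ℂ) * fourierT ω 0)) ∧
    ∀ s : Fin n → ℝ, Function.Injective s →
      (∏ j ∈ Finset.range n, (j.factorial : ℂ)) *
        ∫ a : Fin n → ℝ,
          (p a : ℂ) *
            Matrix.det (Matrix.of fun b c : Fin n => Complex.exp (Complex.I * (a b) * (s c))) /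
            (vdmC (fun j => Complex.I * (s j)) * (vdm a : ℂ))
      = ∏ j : Fin n, fourierT ω (s j) / fourierT ω 0 := by
  have hω := DerivMomentsIntegrable.of_integrable_abs_rpow_mul hpos hdiff hint
  have hnorm : (C : ℂ) * (n.superFactorial * (∫ x, ω x : ℝ) ^ n) = 1 := by
    exact_mod_cast (integral_polyaEnsemble_eq hω hp).symm.trans hp1
  refine ⟨?_, fun s hs => ?_⟩
  · rw [fourierT_zero, prod_div_distrib, prod_const_one, prod_mul_distrib, prod_const,
      Nat.card_Icc, Nat.add_sub_cancel, ← Nat.cast_prod, Nat.prod_Icc_factorial]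
    exact eq_one_div_of_mul_eq_one_left hnorm
  · have hm0 : ((∫ x, ω x : ℝ) : ℂ) ≠ 0 := Complex.ofReal_ne_zero.2 hω0.ne'
    rw [Nat.superFactorial_eq_factorial_mul_prod_range] at hnorm
    push_cast at hnorm
    rw [integral_polyaEnsemble_mul_det_cexp_div_eq hω hp hs, fourierT_zero, prod_div_distrib,
      prod_const, card_univ, Fintype.card_fin]
    field_simp
    linear_combination (∏ j, fourierT ω (s j)) * hnorm

/-- for a Pólya ensemble on `H₂`, the normalization constant is
`C_n[ω] = ∏_{j=1}^n 1/(j!·ω̂(0))` and the multivariate Fourier transform factorizes into the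
univariate Fourier transforms `∏_j ω̂(s_j)/ω̂(0)`. -/
theorem fourierTransform_polyaEnsemble_hermitian
    (n : ℕ) (hn : 1 ≤ n) (ω : ℝ → ℝ)
    (hpos : ∀ x : ℝ, 0 ≤ ω x)
    (hdiff : ∀ j : ℕ, j < n - 1 → Differentiable ℝ (iteratedDeriv j ω))
    (hint : ∀ κ : ℝ, 1 ≤ κ → κ ≤ n → ∀ j : ℕ, j ≤ n - 1 →
      Integrable (fun x : ℝ => |x| ^ (κ - 1) * |iteratedDeriv j ω x|))
    (hω0 : 0 < ∫ x : ℝ, ω x)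
    (C : ℝ) (p : (Fin n → ℝ) → ℝ)
    (hp : ∀ a : Fin n → ℝ,
      p a = C * vdm a * Matrix.det (Matrix.of fun b c : Fin n =>
        (-1 : ℝ) ^ (b : ℕ) * iteratedDeriv (b : ℕ) ω (a c)))
    (hp0 : ∀ a, 0 ≤ p a) (hpint : Integrable p) (hp1 : ∫ a : Fin n → ℝ, p a = 1) :
    (C : ℂ) = (∏ j ∈ Finset.Icc 1 n, 1 / ((j.factorial : ℂ) * fourierT ω 0)) ∧
    ∀ s : Fin n → ℝ, Function.Injective s →
      (∏ j ∈ Finset.range n, (j.factorial : ℂ)) *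
        ∫ a : Fin n → ℝ,
          (p a : ℂ) *
            Matrix.det (Matrix.of fun b c : Fin n => Complex.exp (Complex.I * (a b) * (s c))) /
            (vdmC (fun j => Complex.I * (s j)) * (vdm a : ℂ))
      = ∏ j : Fin n, fourierT ω (s j) / fourierT ω 0 :=
  fourierTransform_polyaEnsemble_hermitian_general n ω hpos hdiff hint hω0 C p hp hp1
end
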